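/- Let T be an infinite rooted tree, ψ : T → ℂ, m ≠ n natural numbers, and suppose M_ψ : L^(m) → L^(n) is compact. Then lim_{|v|→∞} |ψ(v⁻)|Λ_n(|v|)/Λ_m(|v|) = 0. -/

import Mathlib

open Real Filter

/-- Iterated logarithm: ℓ₀(x) = x, ℓ_{j+1}(x) = 1 + log ℓ_j(x). -/
noncomputable def ell : ℕ → ℝ → ℝ
  | 0, x => x
  | j + 1, x => 1 + Real.log (ell j x)

/-- Λ_k(x) = ∏_{j=0}^{k-1} ℓ_j(x). -/
noncomputable def Lam (k : ℕ) (x : ℝ) : ℝ := ∏ j ∈ Finset.range k, ell j x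

/-- Discrete derivative of f on a rooted tree given by a parent map:
`f v - f (parent v)` (automatically 0 at the root since `parent o = o`). -/
def Der {V : Type*} (parent : V → V) (f : V → ℂ) (v : V) : ℂ := f v - f (parent v)

/-- The set of values |f'(v)|·Λ_k(|v|) over v ≠ o; f ∈ L^(k) iff this set is bounded above. -/
def lipSet {V : Type*} (o : V) (parent : V → V) (depth : V → ℕ) (k : ℕ) (f : V → ℂ) : Set ℝ :=
  {r | ∃ v, v ≠ o ∧ r = ‖Der parent f v‖ * Lam k (depth v)}

/-- ‖f‖_k = |f(o)| + sup_{v ≠ o} |f'(v)|·Λ_k(|v|). -/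
noncomputable def lipNorm {V : Type*} (o : V) (parent : V → V) (depth : V → ℕ) (k : ℕ)
    (f : V → ℂ) : ℝ :=
  ‖f o‖ + sSup (lipSet o parent depth k f)

/- Test M_ψ against the spikes g_k = Λ_m(|v_k|)⁻¹ χ_{v_k⁻} along vertices v_k with
|v_k| → ∞. The only nonzero differences of a spike c χ_a sit at a and at the children of a,
so its L^(k)-seminorm is |c| Λ_k(|a| + 1), attained at any child. Hence the g_k lie in the
unit ball of L^(m), tend to 0 pointwise, and ‖M_ψ g_k‖_n ≥ |ψ(v_k⁻)| Λ_n(|v_k|)/Λ_m(|v_k|);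
compactness forces the latter to tend to 0. -/

lemma one_le_ell : ∀ (j : ℕ) {x : ℝ}, 1 ≤ x → 1 ≤ ell j x
  | 0, _, hx => hx
  | j + 1, _, hx => by
    have := Real.log_nonneg (one_le_ell j hx)
    simp only [ell]
    linarith

lemma ell_mono : ∀ (j : ℕ) {x y : ℝ}, 1 ≤ x → x ≤ y → ell j x ≤ ell j y
  | 0, _, _, _, hxy => hxy
  | j + 1, _, _, hx, hxy => by
    have := Real.log_le_log (by linarith [one_le_ell j hx]) (ell_mono j hx hxy)
    simp only [ell]
    linarith

lemma one_le_Lam (k : ℕ) {x : ℝ} (hx : 1 ≤ x) : 1 ≤ Lam k x :=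
  Finset.one_le_prod fun j _ => one_le_ell j hx

lemma Lam_mono (k : ℕ) {x y : ℝ} (hx : 1 ≤ x) (hxy : x ≤ y) : Lam k x ≤ Lam k y :=
  Finset.prod_le_prod (fun j _ => by linarith [one_le_ell j hx]) fun j _ => ell_mono j hx hxy

lemma sSup_lipSet_le_lipNorm {V : Type*} (o : V) (parent : V → V) (depth : V → ℕ) (k : ℕ)
    (f : V → ℂ) : sSup (lipSet o parent depth k f) ≤ lipNorm o parent depth k f :=
  le_add_of_nonneg_left (norm_nonneg _)

lemma tendsto_single_nhds_zero {V : Type*} [DecidableEq V] (depth : V → ℕ) {a : ℕ → V}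
    (ha : Tendsto (depth ∘ a) atTop atTop) (c : ℕ → ℂ) (w : V) :
    Tendsto (fun k => (Pi.single (a k) (c k) : V → ℂ) w) atTop (nhds 0) := by
  refine tendsto_const_nhds.congr' ?_
  filter_upwards [ha.eventually_gt_atTop (depth w)] with k hk
  rw [Pi.single_eq_of_ne]
  rintro rfl
  exact lt_irrefl _ hk

lemma norm_single_apply_le {V : Type*} [DecidableEq V] (a w : V) (c : ℂ) :
    ‖(Pi.single a c : V → ℂ) w‖ ≤ ‖c‖ := by
  rcases eq_or_ne w a with rfl | hwa
  · rw [Pi.single_eq_same]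
  · rw [Pi.single_eq_of_ne hwa, norm_zero]
    exact norm_nonneg c

section Tree

variable {V : Type*} {o : V} {parent : V → V} {depth : V → ℕ}

lemma one_le_depth (hdepth : ∀ v, v ≠ o → depth v = depth (parent v) + 1) {v : V}
    (hv : v ≠ o) : 1 ≤ depth v := by
  rw [hdepth v hv]
  omega

lemma one_le_Lam_depth (hdepth : ∀ v, v ≠ o → depth v = depth (parent v) + 1) (k : ℕ)
    {v : V} (hv : v ≠ o) : 1 ≤ Lam k (depth v) :=
  one_le_Lam k (by exact_mod_cast one_le_depth hdepth hv)

lemma parent_ne_self (hdepth : ∀ v, v ≠ o → depth v = depth (parent v) + 1) {v : V}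
    (hv : v ≠ o) : parent v ≠ v := by
  intro h
  have := hdepth v hv
  rw [h] at this
  omega

lemma norm_Der_single_mul_Lam_le [DecidableEq V]
    (hdepth : ∀ v, v ≠ o → depth v = depth (parent v) + 1)
    (k : ℕ) (c : ℂ) {v w : V} (hv : v ≠ o) (hw : w ≠ o) :
    ‖Der parent (Pi.single (parent v) c) w‖ * Lam k (depth w) ≤
      ‖c‖ * Lam k (depth v) := by
  have hdv := hdepth v hv
  have hdw := hdepth w hw
  by_cases hwa : w = parent v
  · subst hwa
    have hder : Der parent (Pi.single (parent v) c) (parent v) = c := by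
      rw [Der, Pi.single_eq_same, Pi.single_eq_of_ne (parent_ne_self hdepth hw), sub_zero]
    rw [hder]
    refine mul_le_mul_of_nonneg_left (Lam_mono k ?_ ?_) (norm_nonneg c)
    · exact_mod_cast one_le_depth hdepth hw
    · exact_mod_cast (show depth (parent v) ≤ depth v by omega)
  by_cases hpa : parent w = parent v
  · have hder : Der parent (Pi.single (parent v) c) w = -c := by
      rw [Der, hpa, Pi.single_eq_same, Pi.single_eq_of_ne hwa, zero_sub]
    rw [hpa] at hdw
    rw [hder, norm_neg, show depth w = depth v by omega]
  · have hder : Der parent (Pi.single (parent v) c) w = 0 := by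
      rw [Der, Pi.single_eq_of_ne hwa, Pi.single_eq_of_ne hpa, sub_zero]
    rw [hder, norm_zero, zero_mul]
    exact mul_nonneg (norm_nonneg c) (zero_le_one.trans (one_le_Lam_depth hdepth k hv))

lemma isGreatest_lipSet_single [DecidableEq V]
    (hdepth : ∀ v, v ≠ o → depth v = depth (parent v) + 1)
    (k : ℕ) (c : ℂ) {v : V} (hv : v ≠ o) :
    IsGreatest (lipSet o parent depth k (Pi.single (parent v) c)) (‖c‖ * Lam k (depth v)) := by
  refine ⟨⟨v, hv, ?_⟩, ?_⟩
  · rw [Der, Pi.single_eq_of_ne (parent_ne_self hdepth hv).symm, Pi.single_eq_same, zero_sub,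
      norm_neg]
  · rintro r ⟨w, hw, rfl⟩
    exact norm_Der_single_mul_Lam_le hdepth k c hv hw

variable (parent depth) in
noncomputable def parentSpike [DecidableEq V] (m : ℕ) (v : V) : V → ℂ :=
  Pi.single (parent v) (Lam m (depth v) : ℂ)⁻¹

lemma norm_inv_Lam (hdepth : ∀ v, v ≠ o → depth v = depth (parent v) + 1) (m : ℕ) {v : V}
    (hv : v ≠ o) : ‖(Lam m (depth v) : ℂ)⁻¹‖ = (Lam m (depth v))⁻¹ := by
  rw [norm_inv, Complex.norm_real,
    norm_of_nonneg (zero_le_one.trans (one_le_Lam_depth hdepth m hv))]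

lemma isGreatest_lipSet_parentSpike [DecidableEq V]
    (hdepth : ∀ v, v ≠ o → depth v = depth (parent v) + 1) (m : ℕ) {v : V} (hv : v ≠ o) :
    IsGreatest (lipSet o parent depth m (parentSpike parent depth m v)) 1 := by
  have h := isGreatest_lipSet_single hdepth m (Lam m (depth v) : ℂ)⁻¹ hv
  rwa [norm_inv_Lam hdepth m hv,
    inv_mul_cancel₀ (zero_lt_one.trans_le (one_le_Lam_depth hdepth m hv)).ne'] at h

lemma lipNorm_parentSpike_le_two [DecidableEq V]
    (hdepth : ∀ v, v ≠ o → depth v = depth (parent v) + 1) (m : ℕ) {v : V} (hv : v ≠ o) :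
    lipNorm o parent depth m (parentSpike parent depth m v) ≤ 2 := by
  have hroot : ‖parentSpike parent depth m v o‖ ≤ (Lam m (depth v))⁻¹ :=
    (norm_single_apply_le (parent v) o _).trans_eq (norm_inv_Lam hdepth m hv)
  rw [lipNorm, (isGreatest_lipSet_parentSpike hdepth m hv).csSup_eq]
  linarith [inv_le_one_of_one_le₀ (one_le_Lam_depth hdepth m hv)]

lemma div_Lam_le_lipNorm_mul_parentSpike [DecidableEq V]
    (hdepth : ∀ v, v ≠ o → depth v = depth (parent v) + 1) (ψ : V → ℂ) (m n : ℕ)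
    {v : V} (hv : v ≠ o) :
    ‖ψ (parent v)‖ * Lam n (depth v) / Lam m (depth v) ≤
      lipNorm o parent depth n (fun w => ψ w * parentSpike parent depth m v w) := by
  have hmul : (fun w => ψ w * parentSpike parent depth m v w) =
      Pi.single (parent v) (ψ (parent v) * (Lam m (depth v) : ℂ)⁻¹) :=
    funext fun w => (Pi.single_mul_right_apply _ w ψ _).symm
  rw [hmul]
  refine le_of_eq_of_le ?_ (sSup_lipSet_le_lipNorm o parent depth n _)
  rw [(isGreatest_lipSet_single hdepth n _ hv).csSup_eq, norm_mul, norm_inv_Lam hdepth m hv]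
  ring

end Tree

theorem compact_implies_nu_null_general {V : Type*} (o : V) (parent : V → V) (depth : V → ℕ)
    (hdepth : ∀ v, v ≠ o → depth v = depth (parent v) + 1)
    (ψ : V → ℂ) (m n : ℕ)
    (hcompact : ∀ g : ℕ → V → ℂ,
      (∀ k, BddAbove (lipSet o parent depth m (g k))) →
      (∃ B : ℝ, ∀ k, lipNorm o parent depth m (g k) ≤ B) →
      (∀ v, Tendsto (fun k => g k v) atTop (nhds (0 : ℂ))) →
      Tendsto (fun k => lipNorm o parent depth n (fun w => ψ w * g k w)) atTop
        (nhds (0 : ℝ))) :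
    ∀ ε > (0 : ℝ), ∃ M : ℕ, ∀ v, v ≠ o → M ≤ depth v →
      ‖ψ (parent v)‖ * Lam n (depth v) / Lam m (depth v) < ε := by
  classical
  intro ε hε
  by_contra! hfar
  choose v hvo hvd hvε using hfar
  have hdepth_parent : Tendsto (fun k => depth (parent (v k))) atTop atTop :=
    tendsto_atTop_atTop.2 fun b => ⟨b + 1, fun k hk => by
      have := hdepth _ (hvo k); have := hvd k; omega⟩
  have hnull := hcompact (fun k => parentSpike parent depth m (v k))
    (fun k => (isGreatest_lipSet_parentSpike hdepth m (hvo k)).bddAbove)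
    ⟨2, fun k => lipNorm_parentSpike_le_two hdepth m (hvo k)⟩
    (tendsto_single_nhds_zero depth hdepth_parent _)
  obtain ⟨k, hk⟩ := (hnull.eventually (gt_mem_nhds hε)).exists
  exact hk.not_ge ((hvε k).trans (div_Lam_le_lipNorm_mul_parentSpike hdepth ψ m n (hvo k)))

/-- If M_ψ : L^(m) → L^(n) is compact (in the sense of the standard criterion:
bounded pointwise-null sequences are mapped to norm-null sequences), then
|ψ(v⁻)|Λ_n(|v|)/Λ_m(|v|) → 0 as |v| → ∞. -/
theorem compact_implies_nu_null {V : Type*} (o : V) (parent : V → V) (depth : V → ℕ)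
    (hpar : parent o = o) (hdepth0 : depth o = 0)
    (hdepth : ∀ v, v ≠ o → depth v = depth (parent v) + 1)
    (hchild : ∀ v, ∃ w, w ≠ o ∧ parent w = v)
    (ψ : V → ℂ) (m n : ℕ) (hmn : m ≠ n)
    (hcompact : ∀ g : ℕ → V → ℂ,
      (∀ k, BddAbove (lipSet o parent depth m (g k))) →
      (∃ B : ℝ, ∀ k, lipNorm o parent depth m (g k) ≤ B) →
      (∀ v, Tendsto (fun k => g k v) atTop (nhds (0 : ℂ))) →
      Tendsto (fun k => lipNorm o parent depth n (fun w => ψ w * g k w)) atTop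
        (nhds (0 : ℝ))) :
    ∀ ε > (0 : ℝ), ∃ M : ℕ, ∀ v, v ≠ o → M ≤ depth v →
      ‖ψ (parent v)‖ * Lam n (depth v) / Lam m (depth v) < ε :=
  compact_implies_nu_null_general o parent depth hdepth ψ m n hcompact
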